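/- For every m ≥ 1, the first five occurrences of E_{m,2} in the doubling sequence D∞ start at positions L(E_{m,2},1) = 2^m+1, L(E_{m,2},2) = 3·2^{m−1}+1, L(E_{m,2},3) = 10·2^{m−1}+1, L(E_{m,2},4) = 11·2^{m−1}+1, and L(E_{m,2},5) = 14·2^{m−1}+1. -/

import Mathlib

namespace PD

/-- The period-doubling substitution on the alphabet `Bool`,
where `false` stands for the letter `a` and `true` for the letter `b`:
`σ(a) = ab`, `σ(b) = aa`. -/
def sub : Bool → List Bool
  | false => [false, true]
  | true  => [false, false]

/-- The substitution applied to a finite word. -/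
def subW (w : List Bool) : List Bool := w.flatMap sub

/-- `A m = σ^m(a)`. -/
def A (m : ℕ) : List Bool := subW^[m] [false]

/-- `B m = σ^m(b)`. -/
def B (m : ℕ) : List Bool := subW^[m] [true]

/-- The doubling sequence `D∞` (0-indexed: `D n` is the `(n+1)`-th letter),
the fixed point of `σ` beginning with `a`; `A m` is a prefix of `A (m+1)`,
and `A (n+1)` has length `2^(n+1) > n`. -/
def D (n : ℕ) : Bool := (A (n + 1)).getD n false

/-- `δ m`, the last letter of `A m`. -/
def delta (m : ℕ) : Bool := (A m).getLastD false

/-- The envelope words (`i ∈ {1,2}`): `E m 1 = A m` minus its last letter,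
`E m 2 = A (m-1) ++ (A m` minus its last letter `)`. -/
def E (m i : ℕ) : List Bool :=
  if i = 1 then (A m).dropLast else A (m - 1) ++ (A m).dropLast

/-- `w` occurs at the (1-indexed) position `j` in the finite word `τ`. -/
def OccursIn (w τ : List Bool) (j : ℕ) : Prop :=
  1 ≤ j ∧ (τ.drop (j - 1)).take w.length = w

/-- `w` occurs at the (1-indexed) position `j` in the doubling sequence. -/
def OccursD (w : List Bool) (j : ℕ) : Prop :=
  1 ≤ j ∧ ∀ k < w.length, D (j - 1 + k) = w.getD k false

/-- `w` is a factor of the doubling sequence. -/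
def FactorD (w : List Bool) : Prop := ∃ j, OccursD w j

/-- `L w p`: the (1-indexed) starting position of the `p`-th occurrence of `w`
in the doubling sequence, occurrences being ordered by starting position.
(Each factor occurs infinitely often, so `Nat.nth` enumerates all occurrences
in increasing order.) -/
noncomputable def L (w : List Bool) (p : ℕ) : ℕ := Nat.nth (OccursD w) (p - 1)

/-- The strict total order on envelope words:
`E m₁ i₁ ⊏ E m₂ i₂` iff `m₁ < m₂`, or `m₁ = m₂` and `i₁ < i₂`. -/
def EnvLt (m₁ i₁ m₂ i₂ : ℕ) : Prop := m₁ < m₂ ∨ (m₁ = m₂ ∧ i₁ < i₂)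

/-- `Env(w) = E m i`: the envelope word `E m i` is the `⊏`-minimal envelope
word containing `w` as a factor. -/
def IsEnv (w : List Bool) (m i : ℕ) : Prop :=
  1 ≤ m ∧ (i = 1 ∨ i = 2) ∧ w <:+: E m i ∧
    ∀ m' i', 1 ≤ m' → (i' = 1 ∨ i' = 2) → EnvLt m' i' m i → ¬ w <:+: E m' i'

/-- The substitution `φ₁(a) = a`, `φ₁(b) = bb`. -/
def phi1 : Bool → List Bool
  | false => [false]
  | true  => [true, true]

/-- `Θ₁ = φ₁(D∞)` (0-indexed): `φ₁(A (n+1))` is a prefix of `Θ₁` of length `> n`. -/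
def Theta1 (n : ℕ) : Bool := ((A (n + 1)).flatMap phi1).getD n false

/-- The substitution `φ₂(a) = ab`, `φ₂(b) = acac`, over the alphabet `Fin 3`
where `0` stands for `a`, `1` for `b` and `2` for `c`. -/
def phi2 : Bool → List (Fin 3)
  | false => [0, 1]
  | true  => [0, 2, 0, 2]

/-- `Θ₂ = φ₂(D∞)` (0-indexed). -/
def Theta2 (n : ℕ) : Fin 3 := ((A (n + 1)).flatMap phi2).getD n 0

/-- `N₁(x,p)`: the number of letters `x` among the first `p` letters of `Θ₁`. -/
def N1 (x : Bool) (p : ℕ) : ℕ := ((List.range p).map Theta1).count x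

/-- `N₂(x,p)`: the number of letters `x` among the first `p` letters of `Θ₂`. -/
def N2 (x : Fin 3) (p : ℕ) : ℕ := ((List.range p).map Theta2).count x

end PD

/-!
The doubling sequence satisfies `D(2t) = a` and `D(2t+1) = ¬D(t)`, and
`E_{m+1,2} = σ(E_{m,2})·a`. Since `E_{m,2}` begins with `a`, the word `σ(E_{m,2})·a` has `b` as
its second letter, so it can only start at an odd position `2s+1`, and it does so exactly when
`E_{m,2}` starts at position `s+1`. Hence the occurrences of `E_{m+1,2}` are the images of those of
`E_{m,2}` under `j ↦ 2j-1`, and everything reduces to `E_{1,2} = aa`, whose first occurrences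
are read off the prefix `A_4` of `D∞`.
-/

theorem Nat.count_eq_count_add_one_of_gap {p : ℕ → Prop} [DecidablePred p] {a b : ℕ}
    (hab : a < b) (ha : p a) (hgap : ∀ x, a < x → x < b → ¬p x) :
    Nat.count p b = Nat.count p a + 1 := by
  obtain ⟨c, rfl⟩ : ∃ c, b = a + 1 + c := ⟨b - (a + 1), by omega⟩
  have hc : Nat.count (fun k ↦ p (a + 1 + k)) c = 0 :=
    Nat.count_iff_forall_not.2 fun k hk ↦ hgap _ (by omega) (by omega)
  rw [Nat.count_add, hc, Nat.add_zero, Nat.count_succ_eq_succ_count_iff.2 ha]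

theorem Nat.nth_eq_getElem_of_forall_le_iff {p : ℕ → Prop} {l : List ℕ} {N : ℕ}
    (hl : l.SortedLT) (hlN : ∀ x ∈ l, x ≤ N) (hp : ∀ x ≤ N, p x ↔ x ∈ l)
    {i : ℕ} (hi : i < l.length) : Nat.nth p i = l[i] := by
  classical
  have hmem {x : ℕ} (hx : x ≤ N) (hpx : p x) : ∃ j, ∃ hj : j < l.length, l[j] = x :=
    List.mem_iff_getElem.1 ((hp x hx).1 hpx)
  have hpl (j : ℕ) (hj : j < l.length) : p l[j] :=
    (hp _ (hlN _ (List.getElem_mem hj))).2 (List.getElem_mem hj)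
  suffices hc : Nat.count p l[i] = i by rw [← Nat.nth_count (hpl i hi), hc]
  induction i with
  | zero =>
    refine Nat.count_iff_forall_not.2 fun x hx hpx ↦ ?_
    obtain ⟨j, hj, rfl⟩ := hmem (hx.le.trans (hlN _ (List.getElem_mem hi))) hpx
    exact Nat.not_lt_zero j (hl.getElem_lt_getElem_iff.1 hx)
  | succ i ih =>
    rw [Nat.count_eq_count_add_one_of_gap (hl.getElem_lt_getElem_iff.2 (lt_add_one i))
      (hpl i (by omega)) ?_, ih (by omega)]
    intro x h₁ h₂ hpx
    obtain ⟨j, hj, rfl⟩ := hmem (h₂.le.trans (hlN _ (List.getElem_mem hi))) hpx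
    have := hl.getElem_lt_getElem_iff.1 h₁
    have := hl.getElem_lt_getElem_iff.1 h₂
    omega

namespace PD

lemma subW_cons (x : Bool) (w : List Bool) : subW (x :: w) = false :: (!x) :: subW w := by
  cases x <;> rfl

lemma subW_append (u v : List Bool) : subW (u ++ v) = subW u ++ subW v :=
  List.flatMap_append

lemma length_subW (w : List Bool) : (subW w).length = 2 * w.length := by
  induction w with
  | nil => rfl
  | cons x w ih => rw [subW_cons]; simp only [List.length_cons, ih]; omega

lemma A_succ (k : ℕ) : A (k + 1) = subW (A k) :=
  Function.iterate_succ_apply' subW k [false]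

lemma length_A (k : ℕ) : (A k).length = 2 ^ k := by
  induction k with
  | zero => rfl
  | succ k ih => rw [A_succ, length_subW, ih, pow_succ, mul_comm]

lemma exists_A_eq_false_cons (k : ℕ) : ∃ t, A k = false :: t := by
  induction k with
  | zero => exact ⟨[], rfl⟩
  | succ k ih =>
    obtain ⟨t, ht⟩ := ih
    exact ⟨true :: subW t, by rw [A_succ, ht, subW_cons]; rfl⟩

lemma A_prefix_A_succ (k : ℕ) : A k <+: A (k + 1) := by
  induction k with
  | zero => exact ⟨[true], rfl⟩
  | succ k ih =>
    obtain ⟨t, ht⟩ := ih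
    exact ⟨subW t, by rw [A_succ, A_succ (k + 1), ← subW_append, ht]⟩

lemma A_prefix_A {k l : ℕ} (h : k ≤ l) : A k <+: A l := by
  induction l, h using Nat.le_induction with
  | base => exact List.prefix_refl _
  | succ l _ ih => exact ih.trans (A_prefix_A_succ l)

lemma getD_eq_of_prefix {u v : List Bool} (h : u <+: v) {i : ℕ} (hi : i < u.length) :
    v.getD i false = u.getD i false := by
  obtain ⟨t, rfl⟩ := h
  exact List.getD_append _ _ _ _ hi

lemma D_eq_getD_A {n k : ℕ} (h : n < 2 ^ k) : D n = (A k).getD n false := by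
  have hn : n < (A (n + 1)).length := by
    rw [length_A]
    exact Nat.lt_two_pow_self.trans (Nat.pow_lt_pow_succ one_lt_two)
  rcases le_total k (n + 1) with hk | hk
  · exact getD_eq_of_prefix (A_prefix_A hk) (by rwa [length_A])
  · exact (getD_eq_of_prefix (A_prefix_A hk) hn).symm

lemma getD_subW_append_two_mul (w u : List Bool) (hu : ∀ x ∈ u, x = false) (t : ℕ) :
    (subW w ++ u).getD (2 * t) false = false := by
  induction w generalizing t with
  | nil =>
    show u.getD (2 * t) false = false
    rw [List.getD_eq_getElem?_getD]
    cases h : u[2 * t]? with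
    | none => rfl
    | some x => exact hu x (List.mem_of_getElem? h)
  | cons x w ih =>
    rw [subW_cons]
    cases t with
    | zero => rfl
    | succ t => exact ih t

lemma getD_subW_append_two_mul_add_one (w u : List Bool) {t : ℕ} (ht : t < w.length) :
    (subW w ++ u).getD (2 * t + 1) false = !w.getD t false := by
  induction w generalizing t with
  | nil => simp at ht
  | cons x w ih =>
    rw [subW_cons]
    cases t with
    | zero => rfl
    | succ t => exact ih (by simpa using ht)

lemma D_two_mul (t : ℕ) : D (2 * t) = false := by
  rw [D, A_succ, ← List.append_nil (subW _)]
  exact getD_subW_append_two_mul _ _ (by simp) t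

lemma D_two_mul_add_one (t : ℕ) : D (2 * t + 1) = !D t := by
  have ht : t < 2 ^ (2 * t + 1) :=
    Nat.lt_two_pow_self.trans (Nat.pow_lt_pow_right one_lt_two (by omega))
  rw [D, A_succ, ← List.append_nil (subW _),
    getD_subW_append_two_mul_add_one _ _ (by rwa [length_A]), D_eq_getD_A ht]

lemma dropLast_subW {w : List Bool} (hw : w ≠ []) :
    (subW w).dropLast = subW w.dropLast ++ [false] := by
  obtain ⟨v, x, rfl⟩ := List.eq_nil_or_concat w |>.resolve_left hw
  rw [List.concat_eq_append, List.dropLast_concat, subW_append,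
    List.dropLast_append_of_ne_nil (by simp [subW_cons]), subW_cons]
  rfl

lemma E_two_succ {m : ℕ} (hm : 1 ≤ m) : E (m + 1) 2 = subW (E m 2) ++ [false] := by
  have hA : A m ≠ [] := List.ne_nil_of_length_pos (by rw [length_A]; positivity)
  obtain ⟨k, rfl⟩ : ∃ k, m = k + 1 := ⟨m - 1, by omega⟩
  simp only [E, if_neg (by decide : (2 : ℕ) ≠ 1), Nat.add_sub_cancel]
  rw [A_succ (k + 1), dropLast_subW hA, subW_append, ← A_succ k, List.append_assoc]

lemma odd_of_occursD_subW_false_cons {u : List Bool} {j : ℕ}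
    (h : OccursD (subW (false :: u) ++ [false]) j) : Odd j := by
  obtain ⟨hj, hD⟩ := h
  have hDj : D j = true := by
    simpa [subW_cons, Nat.sub_add_cancel hj] using hD 1 (by simp [length_subW])
  by_contra hodd
  obtain ⟨s, rfl⟩ := (Nat.not_odd_iff_even.1 hodd).two_dvd
  rw [D_two_mul] at hDj
  exact Bool.false_ne_true hDj

lemma occursD_subW_append_false_iff (w : List Bool) (s : ℕ) :
    OccursD (subW w ++ [false]) (2 * s + 1) ↔ OccursD w (s + 1) := by
  have hlen : (subW w ++ [false]).length = 2 * w.length + 1 := by simp [length_subW]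
  simp only [OccursD, hlen, Nat.add_sub_cancel, le_add_iff_nonneg_left, zero_le, true_and]
  constructor
  · intro h k hk
    have hk' := h (2 * k + 1) (by omega)
    rwa [← add_assoc, ← mul_add, D_two_mul_add_one, getD_subW_append_two_mul_add_one _ _ hk,
      Bool.not_inj_iff] at hk'
  · intro h k hk
    obtain ⟨i, rfl | rfl⟩ := Nat.even_or_odd' k
    · rw [← mul_add, D_two_mul, getD_subW_append_two_mul _ _ (by simp)]
    · rw [← add_assoc, ← mul_add, D_two_mul_add_one,
        getD_subW_append_two_mul_add_one _ _ (by omega), h i (by omega)]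

lemma occursD_E_one_two_iff {j : ℕ} (hj : j ≤ 15) :
    OccursD (E 1 2) j ↔ j = 3 ∨ j = 4 ∨ j = 11 ∨ j = 12 ∨ j = 15 := by
  have hocc : OccursD (E 1 2) j ↔
      1 ≤ j ∧ ∀ k < 2, (A 4).getD (j - 1 + k) false = [false, false].getD k false :=
    and_congr_right fun _ ↦ forall₂_congr fun k (hk : k < 2) ↦ by
      rw [D_eq_getD_A (k := 4) (by omega)]; rfl
  rw [hocc]
  interval_cases j <;> decide

theorem occursD_E_two_iff (m : ℕ) {j : ℕ} (hj : j ≤ 14 * 2 ^ m + 1) :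
    OccursD (E (m + 1) 2) j ↔ j = 2 * 2 ^ m + 1 ∨ j = 3 * 2 ^ m + 1 ∨
      j = 10 * 2 ^ m + 1 ∨ j = 11 * 2 ^ m + 1 ∨ j = 14 * 2 ^ m + 1 := by
  induction m generalizing j with
  | zero => exact occursD_E_one_two_iff hj
  | succ m ih =>
    rw [E_two_succ (by omega)]
    obtain ⟨t, ht⟩ := exists_A_eq_false_cons m
    have hE : E (m + 1) 2 = false :: (t ++ (A (m + 1)).dropLast) := by simp [E, ht]
    rw [pow_succ] at hj ⊢
    obtain ⟨s, rfl | rfl⟩ := Nat.even_or_odd' j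
    · refine iff_of_false (fun h ↦ ?_) (by omega)
      rw [hE] at h
      exact Nat.not_odd_iff_even.2 (even_two_mul s) (odd_of_occursD_subW_false_cons h)
    · rw [occursD_subW_append_false_iff, ih (by omega)]
      omega

end PD

open PD
/-- For every `m ≥ 1`, the first five occurrences of `E m 2` in the doubling
sequence start at positions `2^m+1`, `3·2^(m-1)+1`, `10·2^(m-1)+1`, `11·2^(m-1)+1`
and `14·2^(m-1)+1`. -/
theorem doubling_E2_first_five (m : ℕ) (hm : 1 ≤ m) :
    L (E m 2) 1 = 2 ^ m + 1 ∧ L (E m 2) 2 = 3 * 2 ^ (m - 1) + 1 ∧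
      L (E m 2) 3 = 10 * 2 ^ (m - 1) + 1 ∧ L (E m 2) 4 = 11 * 2 ^ (m - 1) + 1 ∧
      L (E m 2) 5 = 14 * 2 ^ (m - 1) + 1 := by
  obtain ⟨n, rfl⟩ : ∃ n, m = n + 1 := ⟨m - 1, by omega⟩
  simp only [L, Nat.add_sub_cancel, pow_succ']
  have hnth {i : ℕ} := Nat.nth_eq_getElem_of_forall_le_iff (p := OccursD (E (n + 1) 2)) (i := i)
    (l := [2 * 2 ^ n + 1, 3 * 2 ^ n + 1, 10 * 2 ^ n + 1, 11 * 2 ^ n + 1, 14 * 2 ^ n + 1])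
    (N := 14 * 2 ^ n + 1) (by simp [List.sortedLT_iff_pairwise]) (by simp)
    (fun x hx ↦ by simpa using occursD_E_two_iff n hx)
  exact ⟨hnth (by simp), hnth (by simp), hnth (by simp), hnth (by simp), hnth (by simp)⟩
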